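/- arXiv:1111.3690 — 2 statements merged into one kernel-verified Lean document; each statement's English description precedes it below -/
import Mathlib

section
/- Let P be an n-voter profile over X and x* ∈ X. Then x* is a possible cowinner for the Borda rule with respect to the addition of k ≥ 1 new candidates if and only if for every z ∈ X \ {x*}: k · N_P(x*, z) ≥ S_B(z, P) − S_B(x*, P), where N_P(x*, z) is the number of votes ranking x* above z and S_B denotes the Borda score in P. -/
namespace PcWNC

abbrev Profile := List (List ℕ)

/-- `v` is a linear-order vote over the candidate set `X`:
a duplicate-free list whose members are exactly the elements of `X`. -/
def IsVote (X : Finset ℕ) (v : List ℕ) : Prop := v.Nodup ∧ ∀ c, c ∈ v ↔ c ∈ X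

/-- `P` is a profile over `X`: every vote is a linear order on `X`. -/
def IsProfile (X : Finset ℕ) (P : Profile) : Prop := ∀ v ∈ P, IsVote X v

/-- Restriction of a profile: delete from each vote the candidates outside `X`. -/
def restrict (X : Finset ℕ) (P : Profile) : Profile :=
  P.map (fun v => v.filter (fun c => decide (c ∈ X)))

/-- `P'` extends `P` (w.r.t. the initial candidate set `X`). -/
def Extends (X : Finset ℕ) (P' P : Profile) : Prop := restrict X P' = P

/-- Plurality score: number of votes ranking `x` first. -/
def ntop (P : Profile) (x : ℕ) : ℕ := P.countP (fun v => decide (v.head? = some x))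

/-- `K`-approval score: number of votes ranking `x` within the top `K` positions. -/
def approval (K : ℕ) (P : Profile) (x : ℕ) : ℕ :=
  P.countP (fun v => decide (x ∈ v.take K))

/-- Number of votes ranking `x` exactly in (1-indexed) position `i`. -/
def nPos (P : Profile) (i : ℕ) (x : ℕ) : ℕ :=
  P.countP (fun v => decide (x ∈ v ∧ v.idxOf x + 1 = i))

/-- Borda score of `x`: total number of candidates ranked below `x` over all votes. -/
def borda (P : Profile) (x : ℕ) : ℕ :=
  (P.map (fun v => v.countP (fun w => decide (v.idxOf x < v.idxOf w)))).sum

/-- Number of votes ranking `x` above `z`. -/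
def nAbove (P : Profile) (x z : ℕ) : ℕ :=
  P.countP (fun v => decide (x ∈ v ∧ z ∈ v ∧ v.idxOf x < v.idxOf z))

/-- Score of `x` under the positional scoring vector `s` (position `i` counted from 0). -/
def score (s : ℕ → ℤ) (P : Profile) (x : ℕ) : ℤ :=
  (P.map (fun v => s (v.idxOf x))).sum

/-- Insert the candidates of `ys` immediately below `x` in the vote `v`. -/
def insertBelow (x : ℕ) (ys : List ℕ) (v : List ℕ) : List ℕ :=
  v.takeWhile (fun c => decide (c ≠ x)) ++ x :: ys ++
    (v.dropWhile (fun c => decide (c ≠ x))).drop 1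

/-- Insert the candidates of `ys` immediately below `x` in every vote of `P`. -/
def insertProfile (x : ℕ) (ys : List ℕ) (P : Profile) : Profile :=
  P.map (insertBelow x ys)

/-- Veto score: number of votes not ranking `x` last. -/
def vetoScore (P : Profile) (x : ℕ) : ℕ :=
  P.countP (fun v => decide (v.getLast? ≠ some x))

/-!
Adding new candidates to a vote raises the Borda contribution of an old candidate `c` by the
number of new candidates placed below `c`. If `z` is above `x*` in a vote, every new candidate
below `x*` is also below `z`; otherwise `x*` gains at most `k` more than `z`. Summing over the
votes, `S(z, P') - S(x*, P') ≥ S(z, P) - S(x*, P) - k N(x*, z)`, which gives necessity.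
Conversely, put all `k` new candidates directly below `x*` in every vote: `x*` gains `k n`, an
old `z` gains `k` exactly in the votes ranking it above `x*`, and every new candidate is below `x*`.
-/

section Lists

variable {α : Type*}

theorem nodup_append_cons_append {a b ys : List α} {x : α} (hl : (a ++ x :: b).Nodup)
    (hys : ys.Nodup) (hdisj : ∀ y ∈ ys, y ∉ a ++ x :: b) : (a ++ x :: (ys ++ b)).Nodup := by
  have hperm : (a ++ x :: (ys ++ b)).Perm (ys ++ (a ++ x :: b)) := by
    simpa using List.perm_append_comm_assoc (a ++ [x]) ys b
  exact hperm.nodup_iff.2 (hys.append hl fun y hy hy' => hdisj y hy hy')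

variable [BEq α] [LawfulBEq α]

def numBelow (v : List α) (c : α) : ℕ :=
  v.countP (fun w => decide (v.idxOf c < v.idxOf w))

theorem idxOf_lt_idxOf_append_cons_iff {a b : List α} {c w : α} (hl : (a ++ c :: b).Nodup)
    (hw : w ∈ a ++ c :: b) :
    (a ++ c :: b).idxOf c < (a ++ c :: b).idxOf w ↔ w ∈ b := by
  rw [List.nodup_append, List.nodup_cons] at hl
  obtain ⟨-, ⟨hcb, -⟩, hab⟩ := hl
  have hca : c ∉ a := fun h => hab c h c List.mem_cons_self rfl
  rw [List.idxOf_append_of_notMem hca, List.idxOf_cons_self]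
  rw [List.mem_append, List.mem_cons] at hw
  rcases hw with hwa | rfl | hwb
  · have := List.idxOf_lt_length_iff.2 hwa
    rw [List.idxOf_append_of_mem hwa]
    exact iff_of_false (by omega) fun hwb => hab w hwa w (List.mem_cons_of_mem _ hwb) rfl
  · simpa [List.idxOf_append_of_notMem hca] using hcb
  · have hwa : w ∉ a := fun h => hab w h w (List.mem_cons_of_mem _ hwb) rfl
    have hcw : c ≠ w := by rintro rfl; exact hcb hwb
    rw [List.idxOf_append_of_notMem hwa, List.idxOf_cons_ne _ hcw]
    simp [hwb]

theorem numBelow_append_cons {a b : List α} {c : α} (hl : (a ++ c :: b).Nodup) :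
    numBelow (a ++ c :: b) c = b.length := by
  have hcb : c ∉ b := (List.nodup_cons.1 (List.nodup_append.1 hl).2.1).1
  have hab : ∀ w ∈ a, w ∉ b := fun w hw hwb =>
    (List.nodup_append.1 hl).2.2 w hw w (List.mem_cons_of_mem _ hwb) rfl
  rw [numBelow, List.countP_congr (q := fun w => decide (w ∈ b))
    fun w hw => by simp [idxOf_lt_idxOf_append_cons_iff hl hw]]
  have ha : a.countP (fun w => decide (w ∈ b)) = 0 := List.countP_eq_zero.2 (by simpa using hab)
  simp [hcb, ha]

theorem numBelow_lt_numBelow_of_mem {a b : List α} {c w : α} (hl : (a ++ c :: b).Nodup)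
    (hw : w ∈ b) :
    numBelow (a ++ c :: b) w < numBelow (a ++ c :: b) c := by
  obtain ⟨b₁, b₂, rfl⟩ := List.append_of_mem hw
  have e : a ++ c :: (b₁ ++ w :: b₂) = (a ++ c :: b₁) ++ w :: b₂ := by simp
  rw [numBelow_append_cons hl, e, numBelow_append_cons (e ▸ hl)]
  simp only [List.length_append, List.length_cons]
  omega

theorem numBelow_eq_numBelow_filter_add (p : α → Bool) {a b : List α} {c : α}
    (hl : (a ++ c :: b).Nodup) (hc : p c) :
    numBelow (a ++ c :: b) c =
      numBelow ((a ++ c :: b).filter p) c + b.countP (fun w => !p w) := by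
  have e : (a ++ c :: b).filter p = a.filter p ++ c :: b.filter p := by
    simp [hc]
  rw [numBelow_append_cons hl, e, numBelow_append_cons (e ▸ hl.filter p),
    ← List.countP_eq_length_filter]
  simpa using List.length_eq_countP_add_countP p (l := b)

theorem numBelow_filter_add_numBelow_le (p : α → Bool) {v : List α} (hv : v.Nodup) {x z : α}
    (hx : x ∈ v) (hz : z ∈ v) (hzx : z ≠ x) (hpx : p x) (hpz : p z) :
    numBelow (v.filter p) z + numBelow v x ≤
      numBelow v z + numBelow (v.filter p) x +
        if (v.filter p).idxOf x < (v.filter p).idxOf z then v.countP (fun w => !p w) else 0 := by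
  obtain ⟨a, b, rfl⟩ := List.append_of_mem hx
  have hx_split := numBelow_eq_numBelow_filter_add p hv hpx
  by_cases hzb : z ∈ b
  · obtain ⟨b₁, b₂, rfl⟩ := List.append_of_mem hzb
    have e : a ++ x :: (b₁ ++ z :: b₂) = (a ++ x :: b₁) ++ z :: b₂ := by simp
    have hz_split := numBelow_eq_numBelow_filter_add p (e ▸ hv) hpz
    rw [← e] at hz_split
    have hfilter : (a ++ x :: (b₁ ++ z :: b₂)).filter p =
        a.filter p ++ x :: (b₁ ++ z :: b₂).filter p := by simp [hpx]
    have hzf : z ∈ (b₁ ++ z :: b₂).filter p := by simp [hpz]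
    have habove : ((a ++ x :: (b₁ ++ z :: b₂)).filter p).idxOf x <
        ((a ++ x :: (b₁ ++ z :: b₂)).filter p).idxOf z := by
      rw [hfilter]
      exact (idxOf_lt_idxOf_append_cons_iff (hfilter ▸ hv.filter p) (by simp [hpz])).2 hzf
    have hsub : (b₁ ++ z :: b₂).countP (fun w => !p w) ≤
        (a ++ x :: (b₁ ++ z :: b₂)).countP (fun w => !p w) :=
      ((List.sublist_cons_self x _).trans (List.sublist_append_right a _)).countP_le
    rw [if_pos habove]
    omega
  · have hza : z ∈ a := by simpa [hzx, hzb] using hz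
    obtain ⟨a₁, a₂, rfl⟩ := List.append_of_mem hza
    have e : (a₁ ++ z :: a₂) ++ x :: b = a₁ ++ z :: (a₂ ++ x :: b) := by simp
    have hz_split := numBelow_eq_numBelow_filter_add p (e ▸ hv) hpz
    rw [← e] at hz_split
    have hsub : b.countP (fun w => !p w) ≤ (a₂ ++ x :: b).countP (fun w => !p w) :=
      ((List.sublist_cons_self x _).trans (List.sublist_append_right a₂ _)).countP_le
    omega

theorem numBelow_append_cons_append_self {a b ys : List α} {x : α}
    (hl : (a ++ x :: (ys ++ b)).Nodup) (hl' : (a ++ x :: b).Nodup) :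
    numBelow (a ++ x :: (ys ++ b)) x = numBelow (a ++ x :: b) x + ys.length := by
  rw [numBelow_append_cons hl, numBelow_append_cons hl', List.length_append, add_comm]

theorem numBelow_append_cons_append_add {a b ys : List α} {x z : α}
    (hl : (a ++ x :: (ys ++ b)).Nodup) (hl' : (a ++ x :: b).Nodup) (hz : z ∈ a ++ x :: b)
    (hzx : z ≠ x) :
    numBelow (a ++ x :: (ys ++ b)) z +
        (if (a ++ x :: b).idxOf x < (a ++ x :: b).idxOf z then ys.length else 0) =
      numBelow (a ++ x :: b) z + ys.length := by
  rw [List.mem_append, List.mem_cons] at hz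
  rcases hz with hza | rfl | hzb
  · obtain ⟨a₁, a₂, rfl⟩ := List.append_of_mem hza
    have e : ∀ l, (a₁ ++ z :: a₂) ++ x :: l = a₁ ++ z :: (a₂ ++ x :: l) := by simp
    have hzb : z ∉ b := fun hzb =>
      (List.nodup_append.1 hl').2.2 z hza z (List.mem_cons_of_mem _ hzb) rfl
    rw [if_neg ((idxOf_lt_idxOf_append_cons_iff hl' (by simp)).not.2 hzb), e,
      numBelow_append_cons (e _ ▸ hl), e, numBelow_append_cons (e _ ▸ hl')]
    simp only [List.length_append, List.length_cons]
    omega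
  · exact absurd rfl hzx
  · obtain ⟨b₁, b₂, rfl⟩ := List.append_of_mem hzb
    have e : ∀ l, a ++ x :: (l ++ (b₁ ++ z :: b₂)) = (a ++ x :: (l ++ b₁)) ++ z :: b₂ := by
      simp
    rw [if_pos ((idxOf_lt_idxOf_append_cons_iff hl' (by simp)).2 hzb), e,
      numBelow_append_cons (e _ ▸ hl), ← List.nil_append (b₁ ++ z :: b₂), e,
      numBelow_append_cons (e _ ▸ hl')]

end Lists

theorem borda_eq_sum_numBelow (P : Profile) (c : ℕ) :
    borda P c = (P.map (numBelow · c)).sum := rfl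

theorem borda_map (g : List ℕ → List ℕ) (P : Profile) (c : ℕ) :
    borda (P.map g) c = (P.map fun v => numBelow (g v) c).sum := by
  simp [borda_eq_sum_numBelow, Function.comp_def]

theorem nAbove_eq_countP {X : Finset ℕ} {P : Profile} (hP : IsProfile X P) {x z : ℕ}
    (hx : x ∈ X) (hz : z ∈ X) :
    nAbove P x z = P.countP fun v => decide (v.idxOf x < v.idxOf z) :=
  List.countP_congr fun v hv => by simp [((hP v hv).2 x).2 hx, ((hP v hv).2 z).2 hz]

theorem IsVote.countP_notMem_le_card {X Y : Finset ℕ} {v : List ℕ} (hv : IsVote (X ∪ Y) v) :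
    v.countP (fun w => !decide (w ∈ X)) ≤ Y.card := by
  rw [List.countP_eq_length_filter, ← List.toFinset_card_of_nodup (hv.1.filter _)]
  refine Finset.card_le_card fun w hw => ?_
  simp only [List.mem_toFinset, List.mem_filter, Bool.not_eq_true', decide_eq_false_iff_not] at hw
  exact (Finset.mem_union.1 ((hv.2 w).1 hw.1)).resolve_left hw.2

theorem IsProfile.restrict {X Y : Finset ℕ} {P' : Profile} (hP' : IsProfile (X ∪ Y) P') :
    IsProfile X (restrict X P') := by
  simp only [PcWNC.restrict, IsProfile, List.mem_map]
  rintro _ ⟨v, hv, rfl⟩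
  refine ⟨(hP' v hv).1.filter _, fun c => ?_⟩
  simp only [List.mem_filter, decide_eq_true_eq, and_iff_right_iff_imp]
  exact fun hc => ((hP' v hv).2 c).2 (Finset.mem_union_left _ hc)

theorem borda_restrict_add_borda_le {X Y : Finset ℕ} {P' : Profile} (hP' : IsProfile (X ∪ Y) P')
    {x z : ℕ} (hx : x ∈ X) (hz : z ∈ X) (hzx : z ≠ x) :
    borda (restrict X P') z + borda P' x ≤
      borda P' z + borda (restrict X P') x + Y.card * nAbove (restrict X P') x z := by
  have hvote : ∀ v ∈ P', numBelow (v.filter (decide <| · ∈ X)) z + numBelow v x ≤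
      numBelow v z + numBelow (v.filter (decide <| · ∈ X)) x +
        if (v.filter (decide <| · ∈ X)).idxOf x < (v.filter (decide <| · ∈ X)).idxOf z
        then Y.card else 0 := by
    intro v hv
    have hmem : ∀ c ∈ X, c ∈ v := fun c hc => ((hP' v hv).2 c).2 (Finset.mem_union_left _ hc)
    refine (numBelow_filter_add_numBelow_le _ (hP' v hv).1 (hmem x hx) (hmem z hz) hzx
      (by simpa using hx) (by simpa using hz)).trans ?_
    gcongr
    split_ifs
    · exact (hP' v hv).countP_notMem_le_card
    · exact le_rfl
  have hsum := List.sum_le_sum hvote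
  simp only [List.sum_map_add, List.sum_map_ite, List.map_const', List.sum_replicate,
    smul_eq_mul, mul_zero, add_zero] at hsum
  rwa [nAbove_eq_countP hP'.restrict hx hz, borda_eq_sum_numBelow P' x,
    borda_eq_sum_numBelow P' z, PcWNC.restrict, borda_map, borda_map, List.countP_map,
    List.countP_eq_length_filter, mul_comm]

theorem insertBelow_append_cons (ys : List ℕ) {a b : List ℕ} {x : ℕ} (hxa : x ∉ a) :
    insertBelow x ys (a ++ x :: b) = a ++ x :: (ys ++ b) := by
  have ha : ∀ c ∈ a, decide (c ≠ x) = true := fun c hc => by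
    simpa using fun h : c = x => hxa (h ▸ hc)
  rw [insertBelow, List.takeWhile_append_of_pos ha, List.dropWhile_append_of_pos ha]
  simp

theorem IsVote.exists_insertBelow_eq {X : Finset ℕ} {v : List ℕ} (hv : IsVote X v) {x : ℕ}
    (hx : x ∈ X) (ys : List ℕ) :
    ∃ a b, v = a ++ x :: b ∧ insertBelow x ys v = a ++ x :: (ys ++ b) := by
  obtain ⟨a, b, rfl⟩ := List.append_of_mem ((hv.2 x).2 hx)
  have hxa : x ∉ a := fun h => (List.nodup_append.1 hv.1).2.2 x h x List.mem_cons_self rfl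
  exact ⟨a, b, rfl, insertBelow_append_cons ys hxa⟩

section InsertProfile

variable {X : Finset ℕ} {P : Profile} {x : ℕ} {ys : List ℕ}

theorem IsProfile.exists_insertBelow_eq (hP : IsProfile X P) (hx : x ∈ X) (hys : ys.Nodup)
    (hdisj : ∀ y ∈ ys, y ∉ X) {v : List ℕ} (hv : v ∈ P) :
    ∃ a b, v = a ++ x :: b ∧ insertBelow x ys v = a ++ x :: (ys ++ b) ∧
      (a ++ x :: (ys ++ b)).Nodup := by
  obtain ⟨a, b, rfl, hins⟩ := (hP v hv).exists_insertBelow_eq hx ys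
  obtain ⟨hnd, hmem⟩ := hP _ hv
  exact ⟨a, b, rfl, hins,
    nodup_append_cons_append hnd hys fun y hy hyv => hdisj y hy ((hmem y).1 hyv)⟩

theorem IsProfile.insertProfile (hP : IsProfile X P) (hx : x ∈ X) (hys : ys.Nodup)
    (hdisj : ∀ y ∈ ys, y ∉ X) : IsProfile (X ∪ ys.toFinset) (insertProfile x ys P) := by
  simp only [PcWNC.insertProfile, IsProfile, List.mem_map]
  rintro _ ⟨v, hv, rfl⟩
  obtain ⟨a, b, rfl, hins, hnd⟩ := hP.exists_insertBelow_eq hx hys hdisj hv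
  rw [hins]
  refine ⟨hnd, fun c => ?_⟩
  rw [Finset.mem_union, ← (hP _ hv).2, List.mem_toFinset]
  simp only [List.mem_append, List.mem_cons]
  tauto

theorem extends_insertProfile (hP : IsProfile X P) (hx : x ∈ X) (hdisj : ∀ y ∈ ys, y ∉ X) :
    Extends X (insertProfile x ys P) P := by
  rw [Extends, PcWNC.restrict, PcWNC.insertProfile, List.map_map]
  refine (List.map_congr_left fun v hv => ?_).trans (List.map_id P)
  obtain ⟨a, b, rfl, hins⟩ := (hP v hv).exists_insertBelow_eq hx ys
  have hmem : ∀ c ∈ a ++ x :: b, decide (c ∈ X) = true := fun c hc => by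
    simpa using ((hP _ hv).2 c).1 hc
  have hys : ys.filter (decide <| · ∈ X) = [] :=
    List.filter_eq_nil_iff.2 fun y hy => by simpa using hdisj y hy
  rw [Function.comp_apply, id, hins]
  conv_rhs => rw [← List.filter_eq_self.2 hmem]
  simp [List.filter_cons, hys]

theorem borda_insertProfile_self (hP : IsProfile X P) (hx : x ∈ X) (hys : ys.Nodup)
    (hdisj : ∀ y ∈ ys, y ∉ X) :
    borda (insertProfile x ys P) x = borda P x + ys.length * P.length := by
  have hvote : ∀ v ∈ P, numBelow (insertBelow x ys v) x = numBelow v x + ys.length := by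
    intro v hv
    obtain ⟨a, b, rfl, hins, hnd⟩ := hP.exists_insertBelow_eq hx hys hdisj hv
    rw [hins, numBelow_append_cons_append_self hnd (hP _ hv).1]
  rw [PcWNC.insertProfile, borda_map, List.map_congr_left hvote]
  simp [List.sum_map_add, borda_eq_sum_numBelow, mul_comm]

theorem borda_insertProfile_add (hP : IsProfile X P) (hx : x ∈ X) (hys : ys.Nodup)
    (hdisj : ∀ y ∈ ys, y ∉ X) {z : ℕ} (hz : z ∈ X) (hzx : z ≠ x) :
    borda (insertProfile x ys P) z + ys.length * nAbove P x z =
      borda P z + ys.length * P.length := by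
  have hvote : ∀ v ∈ P, numBelow (insertBelow x ys v) z +
      (if v.idxOf x < v.idxOf z then ys.length else 0) = numBelow v z + ys.length := by
    intro v hv
    obtain ⟨a, b, rfl, hins, hnd⟩ := hP.exists_insertBelow_eq hx hys hdisj hv
    rw [hins, numBelow_append_cons_append_add hnd (hP _ hv).1 (((hP _ hv).2 z).2 hz) hzx]
  have hsum := congrArg List.sum (List.map_congr_left hvote)
  simp only [List.sum_map_add, List.sum_map_ite, List.map_const', List.sum_replicate,
    smul_eq_mul, mul_zero, add_zero] at hsum
  rwa [nAbove_eq_countP hP hx hz, PcWNC.insertProfile, borda_map, borda_eq_sum_numBelow,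
    List.countP_eq_length_filter, mul_comm, mul_comm ys.length]

theorem borda_insertProfile_le_self (hP : IsProfile X P) (hx : x ∈ X) (hys : ys.Nodup)
    (hdisj : ∀ y ∈ ys, y ∉ X) {y : ℕ} (hy : y ∈ ys) :
    borda (insertProfile x ys P) y ≤ borda (insertProfile x ys P) x := by
  rw [PcWNC.insertProfile, borda_map, borda_map]
  refine List.sum_le_sum fun v hv => ?_
  obtain ⟨a, b, rfl, hins, hnd⟩ := hP.exists_insertBelow_eq hx hys hdisj hv
  rw [hins]
  exact (numBelow_lt_numBelow_of_mem hnd (List.mem_append_left b hy)).le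

end InsertProfile

theorem stmt_5_general (X : Finset ℕ) (P : Profile) (hP : IsProfile X P)
    (xstar : ℕ) (hx : xstar ∈ X) (k : ℕ) :
    (∃ Y : Finset ℕ, Disjoint X Y ∧ Y.card = k ∧
      ∃ P', IsProfile (X ∪ Y) P' ∧ Extends X P' P ∧
        ∀ z ∈ X ∪ Y, borda P' z ≤ borda P' xstar) ↔
      ∀ z ∈ X, z ≠ xstar →
        (borda P z : ℤ) - (borda P xstar : ℤ) ≤ (k : ℤ) * (nAbove P xstar z : ℤ) := by
  constructor
  · rintro ⟨Y, -, rfl, P', hP', rfl, hwin⟩ z hz hzx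
    have := borda_restrict_add_borda_le hP' hx hz hzx
    have := hwin z (Finset.mem_union_left Y hz)
    omega
  · intro h
    obtain ⟨Y, hYX, rfl⟩ := X.finite_toSet.infinite_compl.exists_subset_card_eq k
    have hdisj : ∀ y ∈ Y.toList, y ∉ X := fun _ hy => hYX (Finset.mem_toList.1 hy)
    have hprof := hP.insertProfile hx Y.nodup_toList hdisj
    rw [Finset.toList_toFinset] at hprof
    refine ⟨Y, Finset.disjoint_right.2 fun _ hy => hYX hy, rfl,
      insertProfile xstar Y.toList P, hprof, extends_insertProfile hP hx hdisj, fun z hz => ?_⟩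
    rcases Finset.mem_union.1 hz with hz | hz
    · rcases eq_or_ne z xstar with rfl | hzx
      · exact le_rfl
      have := borda_insertProfile_add hP hx Y.nodup_toList hdisj hz hzx
      have := borda_insertProfile_self hP hx Y.nodup_toList hdisj
      have := h z hz hzx
      rw [Finset.length_toList] at *
      linarith
    · exact borda_insertProfile_le_self hP hx Y.nodup_toList hdisj (Finset.mem_toList.2 hz)

/-- Borda characterization of possible cowinners w.r.t. adding `k` new candidates. -/
theorem stmt_5 (X : Finset ℕ) (P : Profile) (hP : IsProfile X P)
    (xstar : ℕ) (hx : xstar ∈ X) (k : ℕ) (hk : 1 ≤ k) :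
    (∃ Y : Finset ℕ, Disjoint X Y ∧ Y.card = k ∧
      ∃ P', IsProfile (X ∪ Y) P' ∧ Extends X P' P ∧
        ∀ z ∈ X ∪ Y, borda P' z ≤ borda P' xstar) ↔
      ∀ z ∈ X, z ≠ xstar →
        (borda P z : ℤ) - (borda P xstar : ℤ) ≤ (k : ℤ) * (nAbove P xstar z : ℤ) :=
  stmt_5_general X P hP xstar hx k

end PcWNC
end

section
/- For plurality, if the inequality k · ntop(P, x*) ≥ Σ_{x ∈ X} max(0, ntop(P,x) − ntop(P,x*)) fails, then in every extension P' of P by k new candidates y_1,...,y_k in which every x ∈ X has ntop(P',x) ≤ ntop(P',x*), some new candidate y_j satisfies ntop(P', y_j) > ntop(P', x*); hence x* is not a plurality cowinner in any extension. -/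
namespace PcWNC

/-!
Restricting the extension `P'` to `X` can only raise the plurality score of a candidate of `X`,
and since `P'` has as many votes as `P`, each topped by a candidate of `X ∪ Y`, the top
positions lost by the candidates of `X` are taken by new candidates. So the new candidates
collect at least `∑ x, (ntop P x - ntop P' x) ≥ ∑ x, (ntop P x - ntop P xstar)` votes, while if
none of them beat `xstar` they collect at most `k * ntop P' xstar ≤ k * ntop P xstar`.
-/

lemma sum_ntop_eq_countP (S : Finset ℕ) (P : Profile) :
    ∑ c ∈ S, ntop P c = P.countP (fun v => decide (∃ c ∈ S, v.head? = some c)) := by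
  induction P with
  | nil => simp [ntop]
  | cons v P ih =>
    simp only [ntop, List.countP_cons, Finset.sum_add_distrib] at ih ⊢
    rw [ih]
    congr 1
    cases v <;> simp [Finset.sum_ite_eq]

lemma sum_ntop_le_length (S : Finset ℕ) (P : Profile) : ∑ c ∈ S, ntop P c ≤ P.length :=
  sum_ntop_eq_countP S P ▸ List.countP_le_length

lemma sum_ntop_eq_length {S : Finset ℕ} {P : Profile} (hP : IsProfile S P) (hS : S.Nonempty) :
    ∑ c ∈ S, ntop P c = P.length := by
  rw [sum_ntop_eq_countP, List.countP_eq_length]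
  intro v hv
  obtain ⟨c, hc⟩ := hS
  obtain ⟨a, t, rfl⟩ := List.exists_cons_of_ne_nil (List.ne_nil_of_mem (((hP v hv).2 c).2 hc))
  simpa using ((hP _ hv).2 a).1 List.mem_cons_self

lemma ntop_le_ntop_restrict {X : Finset ℕ} {x : ℕ} (hx : x ∈ X) (P' : Profile) :
    ntop P' x ≤ ntop (restrict X P') x := by
  rw [ntop, ntop, restrict, List.countP_map]
  refine List.countP_mono_left fun v _ hv => ?_
  cases v with
  | nil => simp at hv
  | cons a t => simp_all

lemma sum_ntop_sub_le_sum_ntop_of_extends {X Y : Finset ℕ} {P P' : Profile}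
    (hXY : Disjoint X Y) (hXY_ne : (X ∪ Y).Nonempty) (hP' : IsProfile (X ∪ Y) P')
    (hext : Extends X P' P) :
    ∑ x ∈ X, (ntop P x - ntop P' x) ≤ ∑ y ∈ Y, ntop P' y := by
  have hlen : P.length = P'.length := by rw [← hext, restrict, List.length_map]
  have hsplit := sum_ntop_eq_length hP' hXY_ne
  rw [Finset.sum_union hXY] at hsplit
  rw [Finset.sum_tsub_distrib X fun x hx => hext ▸ ntop_le_ntop_restrict hx P']
  have := sum_ntop_le_length X P
  omega

theorem stmt_11_general (X : Finset ℕ) (P : Profile)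
    (xstar : ℕ) (hx : xstar ∈ X) (k : ℕ)
    (hfail : k * ntop P xstar < ∑ x ∈ X, (ntop P x - ntop P xstar))
    (Y : Finset ℕ) (hXY : Disjoint X Y) (hcard : Y.card = k)
    (P' : Profile) (hP' : IsProfile (X ∪ Y) P') (hext : Extends X P' P)
    (hall : ∀ x ∈ X, ntop P' x ≤ ntop P' xstar) :
    ∃ y ∈ Y, ntop P' xstar < ntop P' y := by
  by_contra! hY
  have hdrop : ntop P' xstar ≤ ntop P xstar := hext ▸ ntop_le_ntop_restrict hx P'
  refine hfail.not_ge ?_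
  calc ∑ x ∈ X, (ntop P x - ntop P xstar)
      ≤ ∑ x ∈ X, (ntop P x - ntop P' x) :=
        Finset.sum_le_sum fun x hxX => Nat.sub_le_sub_left ((hall x hxX).trans hdrop) _
    _ ≤ ∑ y ∈ Y, ntop P' y :=
        sum_ntop_sub_le_sum_ntop_of_extends hXY ⟨xstar, Finset.mem_union_left Y hx⟩ hP' hext
    _ ≤ ∑ _y ∈ Y, ntop P' xstar := Finset.sum_le_sum hY
    _ = k * ntop P' xstar := by rw [Finset.sum_const, hcard, smul_eq_mul]
    _ ≤ k * ntop P xstar := Nat.mul_le_mul_left k hdrop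

/-- Plurality, necessity direction: if the characterizing inequality fails, then in any
extension where all initial candidates are beaten by `xstar`, some new candidate
beats `xstar`. -/
theorem stmt_11 (X : Finset ℕ) (P : Profile) (hP : IsProfile X P)
    (xstar : ℕ) (hx : xstar ∈ X) (k : ℕ)
    (hfail : k * ntop P xstar < ∑ x ∈ X, (ntop P x - ntop P xstar))
    (Y : Finset ℕ) (hXY : Disjoint X Y) (hcard : Y.card = k)
    (P' : Profile) (hP' : IsProfile (X ∪ Y) P') (hext : Extends X P' P)
    (hall : ∀ x ∈ X, ntop P' x ≤ ntop P' xstar) :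
    ∃ y ∈ Y, ntop P' xstar < ntop P' y :=
  stmt_11_general X P xstar hx k hfail Y hXY hcard P' hP' hext hall

end PcWNC
end
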